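/- arXiv:2301.08284 — 5 statements merged into one kernel-verified Lean document; each statement's English description precedes it below -/
import Mathlib

section
/- Let a ∈ ℝ, b ∈ (a, ∞), d ∈ ℕ, κ, δ, K ∈ (0,∞), and let g ∈ C^∞(ℝ^d, ℝ) satisfy |g(x) - g(y)| ≤ K·‖x - y‖ and |g(x)| ≤ κ for all x, y ∈ [a-δ, b+δ]^d. Then there exists f ∈ C^∞(ℝ^d, ℝ) such that (i) f(x) = g(x) for all x ∈ [a,b]^d, (ii) |f(x)| ≤ κ·𝟙_{[a-δ, b+δ]^d}(x) for all x ∈ ℝ^d (so in particular f vanishes outside [a-δ, b+δ]^d), and (iii) |f(x) - f(y)| ≤ (48κd/δ + K)·‖x - y‖ for all x, y ∈ ℝ^d. -/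
open MeasureTheory Metric Set Function
open scoped Convolution

lemma coord_le_norm' {d : ℕ} (u : EuclideanSpace ℝ (Fin d)) (i : Fin d) : |u i| ≤ ‖u‖ := by
  rw [EuclideanSpace.norm_eq]
  have h : |u i| = Real.sqrt (‖u i‖^2) := by
    rw [Real.sqrt_sq_eq_abs]; simp [Real.norm_eq_abs]
  rw [h]
  exact Real.sqrt_le_sqrt
    (Finset.single_le_sum (f := fun j => ‖u j‖^2) (fun j _ => sq_nonneg _) (Finset.mem_univ i))

lemma coord_dist_le {d : ℕ} (u v : EuclideanSpace ℝ (Fin d)) (i : Fin d) :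
    |u i - v i| ≤ dist u v := by
  have := coord_le_norm' (u - v) i
  simpa [dist_eq_norm] using this

set_option maxHeartbeats 1000000 in
theorem stmt9 (a b : ℝ) (hab : a < b) (d : ℕ) (hd : 1 ≤ d)
    (κ δ K : ℝ) (hκ : 0 < κ) (hδ : 0 < δ) (hK : 0 < K)
    (g : EuclideanSpace ℝ (Fin d) → ℝ) (hg : ContDiff ℝ (⊤ : ℕ∞) g)
    (hglip : ∀ x y : EuclideanSpace ℝ (Fin d), (∀ i, x i ∈ Set.Icc (a - δ) (b + δ)) →
      (∀ i, y i ∈ Set.Icc (a - δ) (b + δ)) → |g x - g y| ≤ K * ‖x - y‖)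
    (hgbd : ∀ x : EuclideanSpace ℝ (Fin d), (∀ i, x i ∈ Set.Icc (a - δ) (b + δ)) → |g x| ≤ κ) :
    ∃ f : EuclideanSpace ℝ (Fin d) → ℝ, ContDiff ℝ (⊤ : ℕ∞) f ∧
      (∀ x : EuclideanSpace ℝ (Fin d), (∀ i, x i ∈ Set.Icc a b) → f x = g x) ∧
      (∀ x : EuclideanSpace ℝ (Fin d),
        |f x| ≤ κ * Set.indicator {y : EuclideanSpace ℝ (Fin d) | ∀ i, y i ∈ Set.Icc (a - δ) (b + δ)}
          (fun _ => (1 : ℝ)) x) ∧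
      (∀ x y : EuclideanSpace ℝ (Fin d), |f x - f y| ≤ (48 * κ * d / δ + K) * ‖x - y‖) := by
  classical
  have h8 : (0:ℝ) < δ/8 := by positivity
  have h48 : δ/8 < δ/4 := by linarith
  let ρ : ContDiffBump (0 : EuclideanSpace ℝ (Fin d)) := ⟨δ/8, δ/4, h8, h48⟩
  set C : Set (EuclideanSpace ℝ (Fin d)) :=
    {y | ∀ i, y i ∈ Set.Icc (a - δ/4) (b + δ/4)} with hCdef
  have hCne : C.Nonempty := ⟨WithLp.toLp 2 (fun _ => a), fun i => ⟨by show a - δ/4 ≤ a; linarith, by show a ≤ b + δ/4; linarith⟩⟩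
  set φ₀ : EuclideanSpace ℝ (Fin d) → ℝ := fun x => max 0 (1 - (2/δ) * infDist x C) with hφ₀def
  have hφ₀cont : Continuous φ₀ :=
    continuous_const.max (continuous_const.sub (continuous_const.mul (continuous_infDist_pt _)))
  have hφ₀nonneg : ∀ x, 0 ≤ φ₀ x := fun x => le_max_left _ _
  have hφ₀le1 : ∀ x, φ₀ x ≤ 1 := by
    intro x
    apply max_le (by norm_num)
    have h1 : 0 ≤ infDist x C := infDist_nonneg
    nlinarith [mul_nonneg (le_of_lt (by positivity : (0:ℝ) < 2/δ)) h1]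
  -- Lipschitz bound for φ₀
  have hφ₀lip : ∀ x y, |φ₀ x - φ₀ y| ≤ (2/δ) * ‖x - y‖ := by
    intro x y
    have h1 : |φ₀ x - φ₀ y| ≤ |(1 - (2/δ) * infDist x C) - (1 - (2/δ) * infDist y C)| := by
      simp only [hφ₀def]
      rw [max_comm 0 (1 - 2/δ * infDist x C), max_comm 0 (1 - 2/δ * infDist y C)]
      exact abs_max_sub_max_le_abs _ _ _
    have h2 : |(1 - (2/δ) * infDist x C) - (1 - (2/δ) * infDist y C)|
        = (2/δ) * |infDist x C - infDist y C| := by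
      rw [show (1 - (2/δ) * infDist x C) - (1 - (2/δ) * infDist y C)
          = (2/δ) * (infDist y C - infDist x C) by ring, abs_mul,
        abs_of_pos (by positivity : (0:ℝ) < 2/δ), abs_sub_comm]
    have h3 : |infDist x C - infDist y C| ≤ dist x y := by
      rw [abs_sub_le_iff]
      constructor
      · linarith [infDist_le_infDist_add_dist (x := x) (y := y) (s := C)]
      · linarith [infDist_le_infDist_add_dist (x := y) (y := x) (s := C),
          dist_comm x y]
    calc |φ₀ x - φ₀ y| ≤ (2/δ) * |infDist x C - infDist y C| := h1.trans_eq h2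
      _ ≤ (2/δ) * ‖x - y‖ := by
          rw [← dist_eq_norm]
          exact mul_le_mul_of_nonneg_left h3 (by positivity)
  -- φ₀ equals 1 on C
  have hφ₀one : ∀ x ∈ C, φ₀ x = 1 := by
    intro x hx
    simp [hφ₀def, infDist_zero_of_mem hx]
  -- φ₀ vanishes where some coordinate is outside [a-3δ/4, b+3δ/4]
  have hφ₀zero : ∀ x : EuclideanSpace ℝ (Fin d),
      (∃ i, x i ∉ Set.Icc (a - 3*δ/4) (b + 3*δ/4)) → φ₀ x = 0 := by
    rintro x ⟨i, hi⟩
    have hinf : δ/2 ≤ infDist x C := by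
      by_contra hlt
      push_neg at hlt
      obtain ⟨z, hz, hdz⟩ := (infDist_lt_iff hCne).mp hlt
      have hzi := hz i
      have := coord_dist_le x z i
      simp only [Set.mem_Icc, not_and_or, not_le] at hi
      rcases hi with hi | hi
      · have : δ/2 ≤ |x i - z i| := by
          rw [abs_sub_comm]
          calc δ/2 ≤ z i - x i := by
                simp only [Set.mem_Icc] at hzi; linarith [hzi.1]
            _ ≤ |z i - x i| := le_abs_self _
        linarith [coord_dist_le x z i]
      · have : δ/2 ≤ |x i - z i| := by
          calc δ/2 ≤ x i - z i := by
                simp only [Set.mem_Icc] at hzi; linarith [hzi.2]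
            _ ≤ |x i - z i| := le_abs_self _
        linarith [coord_dist_le x z i]
    have : 1 - (2/δ) * infDist x C ≤ 0 := by
      have : (2/δ) * (δ/2) ≤ (2/δ) * infDist x C :=
        mul_le_mul_of_nonneg_left hinf (by positivity)
      have h2 : (2/δ) * (δ/2) = 1 := by field_simp
      linarith
    simp [hφ₀def, max_eq_left this]
  -- the mollified cutoff
  set φ : EuclideanSpace ℝ (Fin d) → ℝ :=
    ρ.normed volume ⋆[ContinuousLinearMap.lsmul ℝ ℝ, volume] φ₀ with hφdef
  have hφsmooth : ContDiff ℝ (⊤:ℕ∞) φ :=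
    ρ.hasCompactSupport_normed.contDiff_convolution_left _ ρ.contDiff_normed
      hφ₀cont.locallyIntegrable
  have hρOut : ρ.rOut = δ/4 := rfl
  -- φ = 1 on [a,b]^d
  have hφone : ∀ x : EuclideanSpace ℝ (Fin d), (∀ i, x i ∈ Set.Icc a b) → φ x = 1 := by
    intro x hx
    have h : ∀ y ∈ ball x ρ.rOut, φ₀ y = φ₀ x := by
      intro y hy
      have hyC : y ∈ C := by
        intro i
        have h1 := coord_dist_le y x i
        rw [mem_ball, hρOut] at hy
        have h2 := hx i
        simp only [Set.mem_Icc] at h2 ⊢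
        have := abs_le.mp (h1.trans hy.le)
        constructor <;> linarith [this.1, this.2]
      have hxC : x ∈ C := fun i => by
        have := hx i; simp only [Set.mem_Icc] at this ⊢; constructor <;> linarith [this.1, this.2]
      rw [hφ₀one y hyC, hφ₀one x hxC]
    rw [hφdef, ContDiffBump.normed_convolution_eq_right h]
    exact hφ₀one x (fun i => by
      have := hx i; simp only [Set.mem_Icc] at this ⊢; constructor <;> linarith [this.1, this.2])
  -- φ = 0 outside [a-δ, b+δ]^d
  have hφzero : ∀ x : EuclideanSpace ℝ (Fin d),
      ¬(∀ i, x i ∈ Set.Icc (a - δ) (b + δ)) → φ x = 0 := by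
    intro x hx
    push_neg at hx
    obtain ⟨i, hi⟩ := hx
    have hout : ∀ y ∈ ball x ρ.rOut, φ₀ y = φ₀ x := by
      intro y hy
      rw [mem_ball, hρOut] at hy
      have h1 := coord_dist_le y x i
      simp only [Set.mem_Icc, not_and_or, not_le] at hi
      have hy0 : φ₀ y = 0 := by
        apply hφ₀zero
        refine ⟨i, ?_⟩
        simp only [Set.mem_Icc, not_and_or, not_le]
        have := abs_le.mp (h1.trans hy.le)
        rcases hi with hi | hi
        · left; linarith [this.1, this.2]
        · right; linarith [this.1, this.2]
      have hx0 : φ₀ x = 0 := by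
        apply hφ₀zero
        refine ⟨i, ?_⟩
        simp only [Set.mem_Icc, not_and_or, not_le]
        rcases hi with hi | hi
        · left; linarith
        · right; linarith
      rw [hy0, hx0]
    rw [hφdef, ContDiffBump.normed_convolution_eq_right hout]
    apply hφ₀zero
    simp only [Set.mem_Icc, not_and_or, not_le] at hi
    refine ⟨i, ?_⟩
    simp only [Set.mem_Icc, not_and_or, not_le]
    rcases hi with hi | hi
    · left; linarith
    · right; linarith
  -- integral representation and integrability
  have hφeq : ∀ x, φ x = ∫ t, ρ.normed volume t * φ₀ (x - t) := by
    intro x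
    rw [hφdef, convolution_def]
    simp [ContinuousLinearMap.lsmul_apply, smul_eq_mul]
  have hint : ∀ x : EuclideanSpace ℝ (Fin d),
      Integrable (fun t => ρ.normed volume t * φ₀ (x - t)) volume := by
    intro x
    apply Continuous.integrable_of_hasCompactSupport
    · exact (ρ.contDiff_normed (n := ⊤)).continuous.mul (hφ₀cont.comp (continuous_const.sub continuous_id))
    · exact ρ.hasCompactSupport_normed.mul_right
  -- bounds on φ
  have hφnonneg : ∀ x, 0 ≤ φ x := by
    intro x
    rw [hφeq]
    exact integral_nonneg fun t => mul_nonneg (ρ.nonneg_normed t) (hφ₀nonneg _)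
  have hφle1 : ∀ x, φ x ≤ 1 := by
    intro x
    rw [hφeq]
    calc (∫ t, ρ.normed volume t * φ₀ (x - t)) ≤ ∫ t, ρ.normed volume t := by
          apply integral_mono (hint x) ρ.integrable_normed
          intro t
          exact mul_le_of_le_one_right (ρ.nonneg_normed t) (hφ₀le1 _)
      _ = 1 := ρ.integral_normed
  -- Lipschitz bound for φ
  have hφlip : ∀ x y, |φ x - φ y| ≤ (2/δ) * ‖x - y‖ := by
    intro x y
    rw [hφeq, hφeq, ← integral_sub (hint x) (hint y)]
    simp_rw [← mul_sub]
    have hintsub : Integrable (fun t => ρ.normed volume t * (φ₀ (x - t) - φ₀ (y - t))) volume := by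
      have h := (hint x).sub (hint y)
      simpa [mul_sub, Pi.sub_def] using h
    calc |∫ t, ρ.normed volume t * (φ₀ (x - t) - φ₀ (y - t))|
        ≤ ∫ t, |ρ.normed volume t * (φ₀ (x - t) - φ₀ (y - t))| := by
          have h := norm_integral_le_integral_norm (μ := volume)
            (fun t => ρ.normed volume t * (φ₀ (x - t) - φ₀ (y - t)))
          simp only [Real.norm_eq_abs] at h
          exact h
      _ ≤ ∫ t, ρ.normed volume t * ((2/δ) * ‖x - y‖) := by
          apply integral_mono hintsub.abs (ρ.integrable_normed.mul_const _)
          intro t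
          dsimp only
          rw [abs_mul, abs_of_nonneg (ρ.nonneg_normed t)]
          apply mul_le_mul_of_nonneg_left _ (ρ.nonneg_normed t)
          have := hφ₀lip (x - t) (y - t)
          simpa using this
      _ = (2/δ) * ‖x - y‖ := by
          rw [integral_mul_const, ρ.integral_normed, one_mul]
  -- the function f
  refine ⟨fun x => φ x * g x, hφsmooth.mul hg, ?_, ?_, ?_⟩
  · intro x hx
    show φ x * g x = g x
    rw [hφone x hx, one_mul]
  · intro x
    show |φ x * g x| ≤ _
    by_cases hx : ∀ i, x i ∈ Set.Icc (a - δ) (b + δ)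
    · rw [Set.indicator_of_mem (show x ∈ {y : EuclideanSpace ℝ (Fin d) |
          ∀ i, y i ∈ Set.Icc (a - δ) (b + δ)} from hx), mul_one, abs_mul]
      calc |φ x| * |g x| ≤ 1 * κ := by
            apply mul_le_mul _ (hgbd x hx) (abs_nonneg _) (by norm_num)
            rw [abs_of_nonneg (hφnonneg x)]; exact hφle1 x
        _ = κ := one_mul κ
    · rw [Set.indicator_of_notMem (show x ∉ {y : EuclideanSpace ℝ (Fin d) |
          ∀ i, y i ∈ Set.Icc (a - δ) (b + δ)} from hx), mul_zero, hφzero x hx, zero_mul, abs_zero]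
  · intro x y
    show |φ x * g x - φ y * g y| ≤ _
    have hd1 : (1:ℝ) ≤ (d:ℝ) := by exact_mod_cast hd
    have hbig : (2/δ) * κ ≤ 48 * κ * (d:ℝ) / δ := by
      rw [div_mul_eq_mul_div]
      rw [div_le_div_iff₀ hδ hδ]
      nlinarith [mul_pos hκ hδ, mul_le_mul_of_nonneg_left hd1 (le_of_lt hκ)]
    have hnormnn : ∀ u v : EuclideanSpace ℝ (Fin d), (0:ℝ) ≤ ‖u - v‖ := fun u v => norm_nonneg _
    have main : ∀ x y : EuclideanSpace ℝ (Fin d), (∀ i, x i ∈ Set.Icc (a - δ) (b + δ)) →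
        |φ x * g x - φ y * g y| ≤ (48 * κ * d / δ + K) * ‖x - y‖ := by
      intro x y hx
      by_cases hy : ∀ i, y i ∈ Set.Icc (a - δ) (b + δ)
      · have hsplit : φ x * g x - φ y * g y = (φ x - φ y) * g x + φ y * (g x - g y) := by ring
        calc |φ x * g x - φ y * g y|
            ≤ |φ x - φ y| * |g x| + |φ y| * |g x - g y| := by
              rw [hsplit]
              refine (abs_add_le _ _).trans ?_
              rw [abs_mul, abs_mul]
          _ ≤ ((2/δ) * ‖x - y‖) * κ + 1 * (K * ‖x - y‖) := by
              apply add_le_add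
              · exact mul_le_mul (hφlip x y) (hgbd x hx) (abs_nonneg _)
                  (by positivity)
              · apply mul_le_mul _ (hglip x y hx hy) (abs_nonneg _) (by norm_num)
                rw [abs_of_nonneg (hφnonneg y)]; exact hφle1 y
          _ ≤ (48 * κ * d / δ + K) * ‖x - y‖ := by
              have h := hnormnn x y
              nlinarith [mul_le_mul_of_nonneg_right hbig h]
      · have hy0 : φ y = 0 := hφzero y hy
        calc |φ x * g x - φ y * g y| = |φ x - φ y| * |g x| := by
              rw [hy0, zero_mul, sub_zero, sub_zero, abs_mul]
          _ ≤ ((2/δ) * ‖x - y‖) * κ :=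
              mul_le_mul (hφlip x y) (hgbd x hx) (abs_nonneg _) (by positivity)
          _ ≤ (48 * κ * d / δ + K) * ‖x - y‖ := by
              have h := hnormnn x y
              nlinarith [mul_le_mul_of_nonneg_right hbig h]
    by_cases hx : ∀ i, x i ∈ Set.Icc (a - δ) (b + δ)
    · exact main x y hx
    · by_cases hy : ∀ i, y i ∈ Set.Icc (a - δ) (b + δ)
      · rw [abs_sub_comm, norm_sub_rev x y]
        exact main y x hy
      · rw [hφzero x hx, hφzero y hy, zero_mul, zero_mul, sub_zero, abs_zero]
        have : (0:ℝ) ≤ 48 * κ * d / δ + K := by positivity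
        exact mul_nonneg this (norm_nonneg _)
end

section
/- Let γ ∈ (0,∞), a ∈ ℝ, b ∈ [a + π/γ, ∞), d ∈ ℕ, and define f : ℝ^d → ℝ by f(x₁,...,x_d) = sin(γ·2^d·(x₁+...+x_d)). Then there exist S points v₁, ..., v_S ∈ [a,b]^d, where S = 2^{d+1}+1 if d ≥ 3, S = 3 if d = 2 and S = 1 if d = 1, and a vector ν ∈ ℝ^d \ {0} and σ ∈ {-2, 2} such that v_k = v_{k-1} + ν and f(v_k) - f(v_{k-1}) = (-1)^k·σ for all k ∈ {2,...,S}. -/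
theorem stmt10 (γ : ℝ) (hγ : 0 < γ) (a b : ℝ) (hb : a + Real.pi / γ ≤ b)
    (d : ℕ) (hd : 1 ≤ d)
    (f : EuclideanSpace ℝ (Fin d) → ℝ)
    (hf : ∀ x : EuclideanSpace ℝ (Fin d), f x = Real.sin (γ * 2 ^ d * ∑ i, x i))
    (S : ℕ) (hS : S = if d = 1 then 1 else if d = 2 then 3 else 2 ^ (d + 1) + 1) :
    ∃ (v : ℕ → EuclideanSpace ℝ (Fin d)) (ν : EuclideanSpace ℝ (Fin d)) (σ : ℝ),
      ν ≠ 0 ∧ (σ = -2 ∨ σ = 2) ∧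
      (∀ k : ℕ, 1 ≤ k → k ≤ S → ∀ i, v k i ∈ Set.Icc a b) ∧
      (∀ k : ℕ, 2 ≤ k → k ≤ S →
        v k = v (k - 1) + ν ∧ f (v k) - f (v (k - 1)) = (-1 : ℝ) ^ k * σ) := by
  have hπ := Real.pi_pos
  set c : ℝ := γ * 2 ^ d * d with hc_def
  have hdpos : (0 : ℝ) < d := by exact_mod_cast hd
  have hc : 0 < c := by positivity
  set m : ℤ := ⌈c * a / Real.pi - 1 / 2⌉ with hm_def
  set t : ℝ := Real.pi / 2 + m * Real.pi with ht_def
  have ht1 : c * a ≤ t := by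
    have h1 : c * a / Real.pi - 1 / 2 ≤ (m : ℝ) := Int.le_ceil _
    have h2 : c * a / Real.pi ≤ (m : ℝ) + 1 / 2 := by linarith
    have h3 : c * a ≤ ((m : ℝ) + 1 / 2) * Real.pi := by
      rw [div_le_iff₀ hπ] at h2; linarith
    rw [ht_def]; linarith
  have ht2 : t < c * a + Real.pi := by
    have h1 : (m : ℝ) < c * a / Real.pi - 1 / 2 + 1 := Int.ceil_lt_add_one _
    have h3 : ((m : ℝ) - 1 / 2) * Real.pi < c * a := by
      rw [← lt_div_iff₀ hπ]; linarith
    rw [ht_def]; nlinarith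
  have hsin : Real.sin t = (-1 : ℝ) ^ m := by
    rw [ht_def, Real.sin_add_int_mul_pi, Real.sin_pi_div_two, mul_one]
  set α : ℝ := t / c with hα_def
  have hcα : c * α = t := by rw [hα_def]; field_simp
  have hαa : a ≤ α := by
    rw [hα_def, le_div_iff₀ hc, mul_comm]; exact ht1
  have hαlt : α < a + Real.pi / c := by
    rw [hα_def, div_lt_iff₀ hc]
    have h : (a + Real.pi / c) * c = c * a + Real.pi := by field_simp
    rw [h]; exact ht2
  -- number of points bound
  have hSnat : S ≤ 2 ^ d * d := by
    subst hS
    rcases d with _ | _ | _ | n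
    · omega
    · norm_num
    · norm_num
    · have h1 : 1 ≤ 2 ^ (n + 3) := Nat.one_le_two_pow
      have heq : (if n + 3 = 1 then 1 else if n + 3 = 2 then 3 else 2 ^ (n + 3 + 1) + 1)
          = 2 ^ (n + 3 + 1) + 1 := by
        rw [if_neg (by omega), if_neg (by omega)]
      rw [heq]
      have h2 : 2 ^ (n + 3 + 1) + 1 ≤ 3 * 2 ^ (n + 3) := by
        rw [pow_succ]; omega
      have h3 : 3 * 2 ^ (n + 3) ≤ (n + 3) * 2 ^ (n + 3) :=
        Nat.mul_le_mul_right _ (by omega)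
      exact h2.trans (h3.trans (le_of_eq (Nat.mul_comm _ _)))
  have hS1 : 1 ≤ S := by
    rw [hS]; split_ifs
    · omega
    · omega
    · exact Nat.le_add_left 1 _
  have hstep : (0 : ℝ) < Real.pi / c := by positivity
  -- upper bound for all points
  have hupper : ∀ k : ℕ, k ≤ S → α + (k - 1 : ℕ) * (Real.pi / c) ≤ b := by
    intro k hk
    have h1 : ((k - 1 : ℕ) : ℝ) ≤ (S : ℝ) - 1 := by
      have hn : (k - 1 : ℕ) ≤ S - 1 := Nat.sub_le_sub_right hk 1
      have := (Nat.cast_le (α := ℝ)).mpr hn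
      push_cast [hS1] at this ⊢
      linarith
    have h2 : α + ((k - 1 : ℕ) : ℝ) * (Real.pi / c) ≤ α + ((S : ℝ) - 1) * (Real.pi / c) := by
      have := mul_le_mul_of_nonneg_right h1 hstep.le
      linarith
    have h3 : α + ((S : ℝ) - 1) * (Real.pi / c) < a + (S : ℝ) * (Real.pi / c) := by
      nlinarith
    have h4 : (S : ℝ) * (Real.pi / c) ≤ Real.pi / γ := by
      have hcast : (S : ℝ) ≤ 2 ^ d * d := by exact_mod_cast hSnat
      have heq : (2 ^ d * d : ℝ) * (Real.pi / c) = Real.pi / γ := by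
        rw [hc_def]; field_simp
      nlinarith
    linarith
  refine ⟨fun k => (WithLp.toLp 2 (fun _ => α + (k - 1 : ℕ) * (Real.pi / c)) : EuclideanSpace ℝ (Fin d)),
    (WithLp.toLp 2 (fun _ => Real.pi / c) : EuclideanSpace ℝ (Fin d)), -2 * (-1 : ℝ) ^ m, ?_, ?_, ?_, ?_⟩
  · intro h
    have h0 : Real.pi / c = (0 : ℝ) := by
      simpa using congrArg (fun v : EuclideanSpace ℝ (Fin d) => v ⟨0, hd⟩) h
    exact absurd h0 (ne_of_gt hstep)
  · rcases Int.even_or_odd m with he | ho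
    · left; rw [he.neg_one_zpow]; ring
    · right; rw [ho.neg_one_zpow]; ring
  · intro k hk1 hkS i
    simp only [PiLp.toLp_apply]
    constructor
    · have : (0 : ℝ) ≤ ((k - 1 : ℕ) : ℝ) * (Real.pi / c) := by positivity
      linarith
    · exact hupper k hkS
  · intro k hk2 hkS
    obtain ⟨j, rfl⟩ : ∃ j, k = j + 2 := ⟨k - 2, by omega⟩
    constructor
    · ext i
      simp only [PiLp.toLp_apply, PiLp.add_apply]
      show α + ((j + 1 : ℕ) : ℝ) * (Real.pi / c)
        = α + ((j : ℕ) : ℝ) * (Real.pi / c) + Real.pi / c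
      push_cast
      ring
    · have hsum : ∀ n : ℕ, f (WithLp.toLp 2 (fun _ => α + (n : ℝ) * (Real.pi / c)) : EuclideanSpace ℝ (Fin d))
          = (-1 : ℝ) ^ n * (-1 : ℝ) ^ m := by
        intro n
        rw [hf]
        simp only [PiLp.toLp_apply]
        have hs : (∑ _i : Fin d, (α + (n : ℝ) * (Real.pi / c))) =
            d * (α + (n : ℝ) * (Real.pi / c)) := by
          rw [Finset.sum_const, Finset.card_univ, Fintype.card_fin, nsmul_eq_mul]
        rw [hs]
        have harg : γ * 2 ^ d * ((d : ℝ) * (α + (n : ℝ) * (Real.pi / c)))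
            = t + (n : ℝ) * Real.pi := by
          have h : γ * 2 ^ d * ((d : ℝ) * (α + (n : ℝ) * (Real.pi / c)))
              = c * α + (n : ℝ) * (c * (Real.pi / c)) := by rw [hc_def]; ring
          rw [h, hcα, mul_div_cancel₀ _ (ne_of_gt hc)]
        rw [harg, Real.sin_add_nat_mul_pi, hsin]
      have h1 := hsum (j + 1)
      have h2 := hsum j
      show f (WithLp.toLp 2 (fun _ => α + ((j + 1 : ℕ) : ℝ) * (Real.pi / c)) : EuclideanSpace ℝ (Fin d))
        - f (WithLp.toLp 2 (fun _ => α + ((j : ℕ) : ℝ) * (Real.pi / c)) : EuclideanSpace ℝ (Fin d))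
        = (-1 : ℝ) ^ (j + 2) * (-2 * (-1 : ℝ) ^ m)
      rw [h1, h2]
      generalize ((-1 : ℝ) ^ m : ℝ) = s
      ring
end

section
/- Let d, k ∈ ℕ, let h₁, ..., h_k : ℝ^d → ℝ be affine functions, let v ∈ ℝ^d \ {0}, w ∈ ℝ^d, and let A = {w + λv : λ ∈ ℝ} be the line through w in direction v. Then there exist sign vectors i₀, i₁, ..., i_k ∈ {0,1}^k such that A ⊆ ∪_{j=0}^k H(h, i_j), where for i = (i₁,...,i_k) ∈ {0,1}^k the set H(h, i) = ∩_{m=1}^k {x ∈ ℝ^d : (-1)^{i_m} h_m(x) ≤ 0} is the intersection of the corresponding closed half-spaces. -/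
/-!
Along the line `t ↦ w + t • v` every `hₘ` is an affine function of `t`, hence monotone or
antitone, so after reversing the sign of the antitone ones the sign vector of the point at time
`t` is monotone in `t`. The sign vectors met along the line therefore form a chain in
`{0,1}^k`, and on a chain the number of ones is injective, taking at most `k + 1` values.
-/

open Finset

noncomputable def signIndex (y : ℝ) : Fin 2 := if 0 < y then 1 else 0

lemma neg_one_pow_signIndex_mul_nonpos (y : ℝ) : (-1 : ℝ) ^ (signIndex y : ℕ) * y ≤ 0 := by
  unfold signIndex
  split_ifs with hy
  · simp [hy.le]
  · simpa using hy

lemma signIndex_monotone : Monotone signIndex := by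
  intro y y' hle
  unfold signIndex
  split_ifs with hy hy' <;> first | exact absurd (hy.trans_le hle) hy' | decide

lemma monotone_or_antitone_of_affine {g : ℝ → ℝ} {a b : ℝ} (hg : ∀ t, g t = a + b * t) :
    Monotone g ∨ Antitone g := by
  rcases le_total 0 b with hb | hb
  · exact .inl fun t t' hle => by rw [hg, hg]; nlinarith
  · exact .inr fun t t' hle => by rw [hg, hg]; nlinarith

lemma affine_apply_line {ι : Type*} [Fintype ι] {f : (ι → ℝ) → ℝ} {c : ℝ} {a : ι → ℝ}
    (hf : ∀ x, f x = c + ∑ j, a j * x j) (v w : ι → ℝ) (t : ℝ) :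
    f (w + t • v) = (c + ∑ j, a j * w j) + (∑ j, a j * v j) * t := by
  simp only [hf, Pi.add_apply, Pi.smul_apply, smul_eq_mul, sum_mul, add_assoc, ← sum_add_distrib]
  exact congrArg (c + ·) (sum_congr rfl fun j _ => by ring)

def onesCount {ι : Type*} [Fintype ι] (u : ι → Fin 2) : ℕ := ∑ m, (u m : ℕ)

lemma onesCount_le_card {ι : Type*} [Fintype ι] (u : ι → Fin 2) :
    onesCount u ≤ Fintype.card ι := by
  simpa [onesCount] using sum_le_sum fun m (_ : m ∈ univ) => Nat.le_of_lt_succ (u m).is_lt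

lemma eq_of_le_of_onesCount_eq {ι : Type*} [Fintype ι] {u u' : ι → Fin 2} (hle : u ≤ u')
    (hcount : onesCount u = onesCount u') : u = u' :=
  funext fun m => Fin.ext <|
    (sum_eq_sum_iff_of_le fun m _ => Fin.le_iff_val_le_val.mp (hle m)).mp hcount m (mem_univ m)

lemma IsChain.injOn_onesCount {ι : Type*} [Fintype ι] {S : Set (ι → Fin 2)}
    (hS : IsChain (· ≤ ·) S) : S.InjOn onesCount := by
  intro u hu u' hu' hcount
  rcases hS.total hu hu' with hle | hle
  · exact eq_of_le_of_onesCount_eq hle hcount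
  · exact (eq_of_le_of_onesCount_eq hle hcount.symm).symm

lemma IsChain.exists_subset_range_fin_card_succ {ι : Type*} [Fintype ι] {S : Set (ι → Fin 2)}
    (hS : IsChain (· ≤ ·) S) :
    ∃ I : Fin (Fintype.card ι + 1) → ι → Fin 2, S ⊆ Set.range I := by
  refine ⟨fun j => Function.invFunOn onesCount S j, fun u hu => ?_⟩
  exact ⟨⟨onesCount u, Nat.lt_succ_of_le (onesCount_le_card u)⟩,
    hS.injOn_onesCount.leftInvOn_invFunOn hu⟩

theorem stmt11_general (d k : ℕ)
    (h : Fin k → (Fin d → ℝ) → ℝ)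
    (haff : ∀ m : Fin k, ∃ (c : ℝ) (w : Fin d → ℝ), ∀ x : Fin d → ℝ, h m x = c + ∑ j, w j * x j)
    (v w : Fin d → ℝ) :
    ∃ I : Fin (k + 1) → (Fin k → Fin 2),
      (Set.range fun t : ℝ => w + t • v) ⊆
        ⋃ j : Fin (k + 1), {x : Fin d → ℝ | ∀ m : Fin k, (-1 : ℝ) ^ ((I j m : ℕ)) * h m x ≤ 0} := by
  classical
  set g : Fin k → ℝ → ℝ := fun m t => h m (w + t • v)
  have hg : ∀ m, Monotone (g m) ∨ Antitone (g m) := fun m => by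
    obtain ⟨c, a, hf⟩ := haff m
    exact monotone_or_antitone_of_affine (affine_apply_line hf v w)
  let flip : Fin k → Fin 2 → Fin 2 := fun m => if Monotone (g m) then id else Fin.rev
  have hflip : ∀ m, Function.Involutive (flip m) := fun m => by
    by_cases hm : Monotone (g m) <;> simp [flip, hm, Function.Involutive]
  have hmono : Monotone fun t m => flip m (signIndex (g m t)) := fun t t' hle m => by
    by_cases hm : Monotone (g m)
    · simpa [flip, hm] using signIndex_monotone (hm hle)
    · simpa [flip, hm] using Fin.rev_anti (signIndex_monotone ((hg m).resolve_left hm hle))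
  have hcover := hmono.isChain_range.exists_subset_range_fin_card_succ
  rw [Fintype.card_fin] at hcover
  obtain ⟨J, hJ⟩ := hcover
  refine ⟨fun j m => flip m (J j m), ?_⟩
  rintro _ ⟨t, rfl⟩
  obtain ⟨j, hj⟩ := hJ ⟨t, rfl⟩
  refine Set.mem_iUnion.mpr ⟨j, fun m => ?_⟩
  change (-1 : ℝ) ^ (flip m (J j m) : ℕ) * g m t ≤ 0
  rw [hj, hflip m]
  exact neg_one_pow_signIndex_mul_nonpos _

theorem stmt11 (d k : ℕ) (hd : 1 ≤ d) (hk : 1 ≤ k)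
    (h : Fin k → (Fin d → ℝ) → ℝ)
    (haff : ∀ m : Fin k, ∃ (c : ℝ) (w : Fin d → ℝ), ∀ x : Fin d → ℝ, h m x = c + ∑ j, w j * x j)
    (v w : Fin d → ℝ) (hv : v ≠ 0) :
    ∃ I : Fin (k + 1) → (Fin k → Fin 2),
      (Set.range fun t : ℝ => w + t • v) ⊆
        ⋃ j : Fin (k + 1), {x : Fin d → ℝ | ∀ m : Fin k, (-1 : ℝ) ^ ((I j m : ℕ)) * h m x ≤ 0} :=
  stmt11_general d k h haff v w
end

section
/- Let d ∈ ℕ with d ≥ 3, let κ ∈ (0,∞), let v₁, ..., v_{2^{d+1}+1} ∈ ℝ^d be equally spaced collinear points (v_{k+1} - v_k = v₂ - v₁ ≠ 0 for all k), let A be the line segment containing them, and let f, g : ℝ^d → ℝ satisfy f(v_k) - f(v_{k-1}) = -(f(v_{k+1}) - f(v_k)) ∈ {-2κ, 2κ} for all k ∈ {2,...,2^{d+1}}, and |f(x) - g(x)| < κ for all x ∈ A. Then any cover of A by convex subsets B₁, ..., B_N ⊆ A such that g restricted to each B_j is affine must satisfy N ≥ 2^d. -/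
/-!
If a convex piece `B` on which `g` is affine contained three consecutive points
`v (k-1), v k, v (k+1)`, then `g (v (k-1)) + g (v (k+1)) = 2 g (v k)` because `v k` is their
midpoint, while the zigzag of `f` makes `f (v (k-1)) - 2 f (v k) + f (v (k+1)) = ±4κ`; the three
errors `|f - g| < κ` cannot bridge this gap. A convex piece containing `v a` and `v b` contains
every `v k` in between, so each piece contains at most two of the `2 ^ (d+1) + 1` points, and
`2 N ≥ 2 ^ (d+1) + 1`.
-/

open Finset

theorem Finset.card_le_two_of_forall_not_lt_lt {α : Type*} [LinearOrder α] {s : Finset α}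
    (h : ∀ x ∈ s, ∀ y ∈ s, ∀ z ∈ s, x < y → y < z → False) : #s ≤ 2 := by
  by_contra! hs
  let e := s.orderEmbOfFin rfl
  exact h (e ⟨0, by omega⟩) (by simp [e]) (e ⟨1, by omega⟩) (by simp [e]) (e ⟨2, by omega⟩)
    (by simp [e]) (e.strictMono (by simp)) (e.strictMono (by simp))

section Progression

variable {E : Type*} [AddCommGroup E] {v : ℕ → E} {δ : E}

theorem eq_add_nsmul_of_sub_eq {a n : ℕ} (h : ∀ k, a ≤ k → k < a + n → v (k + 1) - v k = δ)
    {i : ℕ} (hi : i ≤ n) : v (a + i) = v a + i • δ := by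
  induction i with
  | zero => simp
  | succ i ih =>
    rw [← add_assoc, eq_add_of_sub_eq' (h _ (by omega) (by omega)), ih (by omega), succ_nsmul,
      add_assoc]

theorem add_eq_two_nsmul_of_sub_eq {k : ℕ} (h₁ : v (k + 1) - v k = δ)
    (h₂ : v (k + 2) - v (k + 1) = δ) : v k + v (k + 2) = 2 • v (k + 1) := by
  rw [two_nsmul, add_comm]
  exact sub_eq_sub_iff_add_eq_add.mp (h₂.trans h₁.symm)

theorem add_nsmul_mem_segment [Module ℝ E] (x δ : E) {i n : ℕ} (hi : i ≤ n) :
    x + i • δ ∈ segment ℝ x (x + n • δ) := by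
  rcases n.eq_zero_or_pos with rfl | hn
  · simp [Nat.le_zero.mp hi]
  · have hn' : (0 : ℝ) < n := by exact_mod_cast hn
    have ht : ((i : ℝ) / n) • n • δ = i • δ := by
      rw [← Nat.cast_smul_eq_nsmul ℝ n, smul_smul, div_mul_cancel₀ _ hn'.ne',
        Nat.cast_smul_eq_nsmul]
    rw [← ht]
    exact (convex_segment _ _).add_smul_mem (left_mem_segment ℝ _ _) (right_mem_segment ℝ _ _)
      ⟨by positivity, div_le_one_of_le₀ (by exact_mod_cast hi) hn'.le⟩

theorem mem_segment_of_sub_eq [Module ℝ E] {a b k : ℕ}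
    (h : ∀ k, a ≤ k → k < b → v (k + 1) - v k = δ) (hak : a ≤ k) (hkb : k ≤ b) :
    v k ∈ segment ℝ (v a) (v b) := by
  obtain ⟨n, rfl⟩ := Nat.exists_eq_add_of_le (hak.trans hkb)
  obtain ⟨i, rfl⟩ := Nat.exists_eq_add_of_le hak
  rw [eq_add_nsmul_of_sub_eq h (i := i) (by omega), eq_add_nsmul_of_sub_eq h le_rfl]
  exact add_nsmul_mem_segment _ _ (by omega)

theorem card_filter_mem_le_two_of_convex [Module ℝ E] {a b : ℕ}
    (h : ∀ k, a ≤ k → k < b → v (k + 1) - v k = δ) {C : Set E} [DecidablePred (v · ∈ C)]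
    (hC : Convex ℝ C)
    (hC3 : ∀ k, a ≤ k → k + 2 ≤ b → ¬ (v k ∈ C ∧ v (k + 1) ∈ C ∧ v (k + 2) ∈ C)) :
    #{k ∈ Icc a b | v k ∈ C} ≤ 2 := by
  refine card_le_two_of_forall_not_lt_lt fun x hx y hy z hz hxy hyz ↦ ?_
  simp only [mem_filter, mem_Icc] at hx hy hz
  have hmem : ∀ n, x ≤ n → n ≤ z → v n ∈ C := fun n hxn hnz ↦ hC.segment_subset hx.2 hz.2
    (mem_segment_of_sub_eq (fun k hxk hkz ↦ h k (by omega) (by omega)) hxn hnz)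
  exact hC3 (y - 1) (by omega) (by omega)
    ⟨hmem _ (by omega) (by omega), hmem _ (by omega) (by omega), hmem _ (by omega) (by omega)⟩

end Progression

theorem add_eq_two_mul_of_affine {ι : Type*} [Fintype ι] {g : (ι → ℝ) → ℝ} {B : Set (ι → ℝ)}
    {c : ℝ} {w : ι → ℝ} (hg : ∀ p ∈ B, g p = c + ∑ i, w i * p i) {x y z : ι → ℝ}
    (hx : x ∈ B) (hy : y ∈ B) (hz : z ∈ B) (hmid : x + z = 2 • y) :
    g x + g z = 2 * g y := by
  have hlin : w ⬝ᵥ x + w ⬝ᵥ z = w ⬝ᵥ y + w ⬝ᵥ y := by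
    rw [← dotProduct_add, hmid, two_nsmul, dotProduct_add]
  rw [hg x hx, hg y hy, hg z hz]
  simp only [dotProduct] at hlin
  linarith

theorem not_mem_affine_piece_of_zigzag {ι : Type*} [Fintype ι] {f g : (ι → ℝ) → ℝ}
    {B : Set (ι → ℝ)} {κ c : ℝ} {w : ι → ℝ} (hg : ∀ p ∈ B, g p = c + ∑ i, w i * p i)
    (happrox : ∀ p ∈ B, |f p - g p| < κ) {x y z : ι → ℝ} (hmid : x + z = 2 • y)
    (hf : f y - f x = -(f z - f y)) (hjump : f y - f x = -(2 * κ) ∨ f y - f x = 2 * κ) :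
    ¬ (x ∈ B ∧ y ∈ B ∧ z ∈ B) := by
  rintro ⟨hx, hy, hz⟩
  have hgmid := add_eq_two_mul_of_affine hg hx hy hz hmid
  have ex := abs_lt.mp (happrox x hx)
  have ey := abs_lt.mp (happrox y hy)
  have ez := abs_lt.mp (happrox z hz)
  rcases hjump with h | h <;> linarith [ex.1, ex.2, ey.1, ey.2, ez.1, ez.2]

theorem stmt12_general (d : ℕ) (κ : ℝ)
    (v : ℕ → (Fin d → ℝ))
    (hstep : ∀ k : ℕ, 1 ≤ k → k ≤ 2 ^ (d + 1) → v (k + 1) - v k = v 2 - v 1)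
    (f g : (Fin d → ℝ) → ℝ)
    (halt : ∀ k : ℕ, 2 ≤ k → k ≤ 2 ^ (d + 1) →
      f (v k) - f (v (k - 1)) = -(f (v (k + 1)) - f (v k)) ∧
      (f (v k) - f (v (k - 1)) = -(2 * κ) ∨ f (v k) - f (v (k - 1)) = 2 * κ))
    (happrox : ∀ x ∈ segment ℝ (v 1) (v (2 ^ (d + 1) + 1)), |f x - g x| < κ)
    (N : ℕ) (B : Fin N → Set (Fin d → ℝ))
    (hBsub : ∀ j, B j ⊆ segment ℝ (v 1) (v (2 ^ (d + 1) + 1)))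
    (hBconv : ∀ j, Convex ℝ (B j))
    (hcover : segment ℝ (v 1) (v (2 ^ (d + 1) + 1)) ⊆ ⋃ j, B j)
    (hBaff : ∀ j, ∃ (c : ℝ) (w : Fin d → ℝ), ∀ x ∈ B j, g x = c + ∑ i, w i * x i) :
    2 ^ d ≤ N := by
  set M := 2 ^ (d + 1) + 1
  have hstep' : ∀ k, 1 ≤ k → k < M → v (k + 1) - v k = v 2 - v 1 :=
    fun k h₁ h₂ ↦ hstep k h₁ (by omega)
  classical
  let S : Fin N → Finset ℕ := fun j ↦ {k ∈ Icc 1 M | v k ∈ B j}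
  have hS : ∀ j, #(S j) ≤ 2 := fun j ↦ by
    obtain ⟨c, w, hc⟩ := hBaff j
    refine card_filter_mem_le_two_of_convex hstep' (hBconv j) fun k hk hkM ↦ ?_
    obtain ⟨hf, hjump⟩ := halt (k + 1) (by omega) (by omega)
    exact not_mem_affine_piece_of_zigzag hc (fun p hp ↦ happrox p (hBsub j hp))
      (add_eq_two_nsmul_of_sub_eq (hstep' k hk (by omega)) (hstep' (k + 1) (by omega) hkM))
      hf hjump
  have hcov : Icc 1 M ⊆ univ.biUnion S := fun k hk ↦ by
    obtain ⟨j, hj⟩ := Set.mem_iUnion.mp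
      (hcover (mem_segment_of_sub_eq hstep' (mem_Icc.mp hk).1 (mem_Icc.mp hk).2))
    exact mem_biUnion.mpr ⟨j, mem_univ _, mem_filter.mpr ⟨hk, hj⟩⟩
  have hcard := (card_le_card hcov).trans (card_biUnion_le_card_mul _ _ _ fun j _ ↦ hS j)
  rw [Nat.card_Icc, card_univ, Fintype.card_fin] at hcard
  have := pow_succ 2 d
  omega

theorem stmt12 (d : ℕ) (hd : 3 ≤ d) (κ : ℝ) (hκ : 0 < κ)
    (v : ℕ → (Fin d → ℝ)) (hne : v 2 - v 1 ≠ 0)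
    (hstep : ∀ k : ℕ, 1 ≤ k → k ≤ 2 ^ (d + 1) → v (k + 1) - v k = v 2 - v 1)
    (f g : (Fin d → ℝ) → ℝ)
    (halt : ∀ k : ℕ, 2 ≤ k → k ≤ 2 ^ (d + 1) →
      f (v k) - f (v (k - 1)) = -(f (v (k + 1)) - f (v k)) ∧
      (f (v k) - f (v (k - 1)) = -(2 * κ) ∨ f (v k) - f (v (k - 1)) = 2 * κ))
    (happrox : ∀ x ∈ segment ℝ (v 1) (v (2 ^ (d + 1) + 1)), |f x - g x| < κ)
    (N : ℕ) (B : Fin N → Set (Fin d → ℝ))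
    (hBsub : ∀ j, B j ⊆ segment ℝ (v 1) (v (2 ^ (d + 1) + 1)))
    (hBconv : ∀ j, Convex ℝ (B j))
    (hcover : segment ℝ (v 1) (v (2 ^ (d + 1) + 1)) ⊆ ⋃ j, B j)
    (hBaff : ∀ j, ∃ (c : ℝ) (w : Fin d → ℝ), ∀ x ∈ B j, g x = c + ∑ i, w i * x i) :
    2 ^ d ≤ N :=
  stmt12_general d κ v hstep f g halt happrox N B hBsub hBconv hcover hBaff
end

section
/- Let a ∈ ℝ, b ∈ [a, ∞) with max{|a|, |b|} ≥ 2, let d, L ∈ ℕ, ε ∈ (0, 2^d), and let F : ℝ^d → ℝ be a function satisfying sup_{x ∈ [a,b]^d} |F(x) - ∏_{i=1}^d x_i| ≤ ε, such that F is the realization of a ReLU network with at most L layers, P parameters, and all parameters of absolute value at most S. Then P·max{S,1} ≥ ((2^d - ε)/(2d))^{1/L}. -/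
/-!
Every neuron of a ReLU network is an affine combination of the previous layer followed by
`max · 0`, which does not increase absolute values; so on an input whose coordinates are bounded
by `c ≥ 1`, the neurons of layer `k` are bounded by `c · (P · max S 1) ^ k`. Evaluating at the
constant point `(v, …, v)` with `v ∈ [a, b]` and `|v| = c = max |a| |b|`, the product equals
`±c ^ d`, so `c ^ d - ε ≤ c · (P · max S 1) ^ L`. Since `c ≥ 2`, the same holds with
`c = 2`.
-/

open Finset

theorem abs_sum_mul_add_le {ι : Type*} [Fintype ι] {w y : ι → ℝ} {β M R : ℝ}
    (hw : ∀ j, |w j| ≤ M) (hβ : |β| ≤ M) (hy : ∀ j, |y j| ≤ R) (hR : 1 ≤ R) :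
    |∑ j, w j * y j + β| ≤ M * (Fintype.card ι + 1) * R := by
  have hM : 0 ≤ M := (abs_nonneg β).trans hβ
  calc |∑ j, w j * y j + β| ≤ ∑ j, |w j * y j| + |β| :=
        (abs_add_le _ _).trans (add_le_add_left (abs_sum_le_sum_abs _ _) _)
    _ ≤ ∑ _j : ι, M * R + M := by
        gcongr with j
        rw [abs_mul]
        exact mul_le_mul (hw j) (hy j) (abs_nonneg _) hM
    _ ≤ M * (Fintype.card ι + 1) * R := by
        rw [sum_const, card_univ, nsmul_eq_mul]
        nlinarith

theorem abs_layer_le_mul_pow {L' : ℕ} {l : Fin (L' + 1) → ℕ}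
    (W : ∀ k : Fin L', Fin (l k.succ) → Fin (l k.castSucc) → ℝ)
    (B : ∀ k : Fin L', Fin (l k.succ) → ℝ) (y : ∀ k : Fin (L' + 1), Fin (l k) → ℝ)
    {M C R : ℝ} (hW : ∀ k i j, |W k i j| ≤ M) (hB : ∀ k i, |B k i| ≤ M)
    (hC : ∀ k : Fin L', M * ((l k.succ : ℝ) * ((l k.castSucc : ℝ) + 1)) ≤ C)
    (hC1 : 1 ≤ C) (hR : 1 ≤ R) (h0 : ∀ j, |y 0 j| ≤ R)
    (hstep : ∀ k i, |y k.succ i| ≤ |∑ j, W k i j * y k.castSucc j + B k i|) :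
    ∀ k j, |y k j| ≤ R * C ^ (k : ℕ) := by
  intro k
  induction k using Fin.induction with
  | zero => simpa using h0
  | succ k ih =>
    intro i
    have hM : 0 ≤ M := (abs_nonneg _).trans (hB k i)
    have hRC : 1 ≤ R * C ^ (k : ℕ) := one_le_mul_of_one_le_of_one_le hR (one_le_pow₀ hC1)
    have hwidth : (1 : ℝ) ≤ l k.succ := by exact_mod_cast Fin.pos_iff_nonempty.mpr ⟨i⟩
    calc |y k.succ i| ≤ M * (l k.castSucc + 1) * (R * C ^ (k : ℕ)) := by
          simpa using (hstep k i).trans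
            (abs_sum_mul_add_le (hW k i) (hB k i) ih hRC)
      _ ≤ M * ((l k.succ : ℝ) * ((l k.castSucc : ℝ) + 1)) * (R * C ^ (k : ℕ)) := by
          gcongr
          exact le_mul_of_one_le_left (by positivity) hwidth
      _ ≤ C * (R * C ^ (k : ℕ)) := by gcongr; exact hC k
      _ = R * C ^ ((k.succ : Fin (L' + 1)) : ℕ) := by rw [Fin.val_succ, pow_succ]; ring

theorem one_le_sum_layer_params {L' : ℕ} {l : Fin (L' + 1) → ℕ} (hL' : 0 < L')
    (hlast : 1 ≤ l (Fin.last L')) :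
    1 ≤ ∑ k : Fin L', (l k.succ : ℝ) * ((l k.castSucc : ℝ) + 1) := by
  let k₀ : Fin L' := ⟨L' - 1, by omega⟩
  have hk₀ : k₀.succ = Fin.last L' := Fin.ext (by simp [k₀]; omega)
  calc (1 : ℝ) ≤ (l k₀.succ : ℝ) * ((l k₀.castSucc : ℝ) + 1) := by
        rw [hk₀]
        exact one_le_mul_of_one_le_of_one_le (by exact_mod_cast hlast) (by simp)
    _ ≤ _ := single_le_sum (f := fun k : Fin L' => (l k.succ : ℝ) * ((l k.castSucc : ℝ) + 1))
        (fun _ _ => by positivity) (mem_univ k₀)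

theorem exists_mem_Icc_abs_eq_max {a b : ℝ} (hab : a ≤ b) :
    ∃ v ∈ Set.Icc a b, |v| = max |a| |b| := by
  rcases le_total |a| |b| with h | h
  · exact ⟨b, ⟨hab, le_rfl⟩, (max_eq_right h).symm⟩
  · exact ⟨a, ⟨le_rfl, hab⟩, (max_eq_left h).symm⟩

theorem two_pow_sub_le_two_mul_of_pow_sub_le {c Q ε : ℝ} {d : ℕ} (hc : 2 ≤ c) (hd : d ≠ 0)
    (hε : 0 ≤ ε) (h : c ^ d - ε ≤ c * Q) : 2 ^ d - ε ≤ 2 * Q := by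
  obtain ⟨e, rfl⟩ := Nat.exists_eq_succ_of_ne_zero hd
  rw [pow_succ'] at h ⊢
  rcases le_or_gt Q (2 ^ e) with hQ | hQ
  · have h2c : (2 : ℝ) ^ e ≤ c ^ e := pow_le_pow_left₀ (by norm_num) hc e
    have : 2 * (2 ^ e - Q) ≤ c * (2 ^ e - Q) := by gcongr
    nlinarith
  · linarith

theorem div_rpow_one_div_le_of_le_two_mul_pow {t X : ℝ} {d L : ℕ} (ht : 0 ≤ t)
    (hX : 1 ≤ X) (hd : 1 ≤ d) (hL : L ≠ 0) (h : t ≤ 2 * X ^ L) :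
    (t / (2 * d)) ^ ((1 : ℝ) / L) ≤ X := by
  have hd' : (1 : ℝ) ≤ d := by exact_mod_cast hd
  rw [one_div, Real.rpow_inv_le_iff_of_pos (by positivity) (by linarith)
    (by exact_mod_cast Nat.pos_of_ne_zero hL), Real.rpow_natCast, div_le_iff₀ (by positivity)]
  nlinarith [one_le_pow₀ (n := L) hX]

theorem stmt15 (a b : ℝ) (hab : a ≤ b) (hmax : 2 ≤ max |a| |b|)
    (d L : ℕ) (hd : 1 ≤ d) (hL : 1 ≤ L)
    (ε : ℝ) (hε0 : 0 < ε) (hεd : ε < 2 ^ d)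
    (F : (Fin d → ℝ) → ℝ)
    (L' : ℕ) (hL'1 : 1 ≤ L') (hL'L : L' ≤ L)
    (l : Fin (L' + 1) → ℕ) (hl0 : l 0 = d) (hlL : l (Fin.last L') = 1)
    (S : ℝ)
    (W : ∀ k : Fin L', Fin (l k.succ) → Fin (l k.castSucc) → ℝ)
    (B : ∀ k : Fin L', Fin (l k.succ) → ℝ)
    (hW : ∀ k i j, |W k i j| ≤ S) (hB : ∀ k i, |B k i| ≤ S)
    (hreal : ∀ x : Fin d → ℝ, ∃ y : ∀ k : Fin (L' + 1), Fin (l k) → ℝ,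
      (∀ j : Fin (l 0), y 0 j = x (Fin.cast hl0 j)) ∧
      (∀ k : Fin L', (k : ℕ) + 1 < L' →
        y k.succ = fun i => max (∑ j, W k i j * y k.castSucc j + B k i) 0) ∧
      (∀ k : Fin L', (k : ℕ) + 1 = L' →
        y k.succ = fun i => ∑ j, W k i j * y k.castSucc j + B k i) ∧
      (∀ i, y (Fin.last L') i = F x))
    (happrox : ∀ x : Fin d → ℝ, (∀ i, x i ∈ Set.Icc a b) → |F x - ∏ i, x i| ≤ ε) :
    ((2 ^ d - ε) / (2 * d)) ^ ((1 : ℝ) / L) ≤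
      (∑ k : Fin L', (l k.succ : ℝ) * ((l k.castSucc : ℝ) + 1)) * max S 1 := by
  set P := ∑ k : Fin L', (l k.succ : ℝ) * ((l k.castSucc : ℝ) + 1)
  set M := max S 1
  have hPM : 1 ≤ P * M :=
    one_le_mul_of_one_le_of_one_le (one_le_sum_layer_params hL'1 hlL.ge) (le_max_right _ _)
  have hlayer (k : Fin L') : M * ((l k.succ : ℝ) * ((l k.castSucc : ℝ) + 1)) ≤ P * M := by
    rw [mul_comm P]
    gcongr
    exact single_le_sum (f := fun k : Fin L' => (l k.succ : ℝ) * ((l k.castSucc : ℝ) + 1))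
      (fun _ _ => by positivity) (mem_univ k)
  obtain ⟨v, hv, hvc⟩ := exists_mem_Icc_abs_eq_max hab
  obtain ⟨y, hy0, hyrelu, hylast, hyF⟩ := hreal fun _ => v
  have hstep (k : Fin L') (i : Fin (l k.succ)) :
      |y k.succ i| ≤ |∑ j, W k i j * y k.castSucc j + B k i| := by
    rcases (Nat.succ_le_of_lt k.isLt).lt_or_eq with hk | hk
    · rw [hyrelu k hk]
      simpa using abs_max_sub_max_le_abs (∑ j, W k i j * y k.castSucc j + B k i) 0 0
    · rw [hylast k hk]
  have hbound := abs_layer_le_mul_pow W B y (fun k i j => (hW k i j).trans (le_max_left _ _))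
    (fun k i => (hB k i).trans (le_max_left _ _)) hlayer hPM (by linarith)
    (fun j => by rw [hy0, hvc]) hstep (Fin.last L') ⟨0, by omega⟩
  have hF : max |a| |b| ^ d - ε ≤ max |a| |b| * (P * M) ^ L := by
    have happ := happrox _ fun _ => hv
    rw [prod_const, card_univ, Fintype.card_fin] at happ
    have := abs_sub_abs_le_abs_sub (v ^ d) (F fun _ => v)
    rw [hyF, Fin.val_last, hvc] at hbound
    rw [abs_pow, hvc, abs_sub_comm] at this
    have : (P * M) ^ L' ≤ (P * M) ^ L := pow_le_pow_right₀ hPM hL'L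
    nlinarith
  exact div_rpow_one_div_le_of_le_two_mul_pow (by linarith) hPM hd (by omega)
    (two_pow_sub_le_two_mul_of_pow_sub_le hmax (by omega) hε0.le hF)
end
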